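/- arXiv:2202.00643 — 2 statements merged into one kernel-verified Lean document; each statement's English description precedes it below -/
import Mathlib

section
/- Let w be a right-infinite word over a finite alphabet Σ and z a factor of w. Then z ∈ Rad(w) if and only if for every natural number n ≥ |z| there exists N = N(n) such that every factor of w of length at least N has a subfactor of length n that does not contain z as a factor. -/
/-- The factor of `w` of length `n` starting at position `i`. -/
def factorAt {A : Type*} (w : ℕ → A) (i n : ℕ) : List A :=
  (List.range n).map (fun k => w (i + k))

/-- `u` is a (finite, contiguous) factor of the right-infinite word `w`. -/
def IsFactorOf {A : Type*} (u : List A) (w : ℕ → A) : Prop :=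
  ∃ i, u = factorAt w i u.length

/-- The set of factors of `w`. -/
def Fac {A : Type*} (w : ℕ → A) : Set (List A) := {u | IsFactorOf u w}

/-- `w` is recurrent: every factor occurs at arbitrarily large positions. -/
def Recurrent {A : Type*} (w : ℕ → A) : Prop :=
  ∀ u ∈ Fac w, ∀ N : ℕ, ∃ i ≥ N, u = factorAt w i u.length

/-- `w` is uniformly recurrent: each factor occurs in every sufficiently long factor. -/
def UniformlyRecurrent {A : Type*} (w : ℕ → A) : Prop :=
  ∀ u ∈ Fac w, ∃ N : ℕ, ∀ y ∈ Fac w, y.length = N → u <:+: y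

/-- `w` is (purely) periodic. -/
def PeriodicWord {A : Type*} (w : ℕ → A) : Prop :=
  ∃ p ≥ 1, ∀ n, w (n + p) = w n

/-- `w` is eventually periodic. -/
def EventuallyPeriodicWord {A : Type*} (w : ℕ → A) : Prop :=
  ∃ p ≥ 1, ∃ N, ∀ n ≥ N, w (n + p) = w n

/-- The factor complexity function of `w`. -/
noncomputable def cplx {A : Type*} (w : ℕ → A) (n : ℕ) : ℕ :=
  Set.ncard {u | u ∈ Fac w ∧ u.length = n}

/-- A set of finite words is factor-closed. -/
def FactorClosed {A : Type*} (S : Set (List A)) : Prop :=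
  ∀ y ∈ S, ∀ u, u <:+: y → u ∈ S

/-- The radical of `w`. -/
def Rad {A : Type*} (w : ℕ → A) : Set (List A) :=
  {z | z ∈ Fac w ∧ ∀ Y : Finset (List A),
    (∀ y ∈ Y, y ∈ Fac w ∧ z <:+: y) →
    ∃ N : ℕ, ∀ L : List (List A), L.length = N → (∀ y ∈ L, y ∈ Y) →
      L.flatten ∉ Fac w}

/-- The recurrent spectrum of `w`, with classes identified with their factor sets. -/
def RecSpec {A : Type*} (w : ℕ → A) : Set (Set (List A)) :=
  {F | ∃ v : ℕ → A, Recurrent v ∧ F = Fac v ∧ Fac v ⊆ Fac w}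

/-!
Fix `n` and let `Y` be the finite set of length-`n` factors of `w` containing `z`. If every
length-`n` subfactor of a long factor contained `z`, cutting that factor into consecutive blocks
of length `n` would give arbitrarily long concatenations of elements of `Y` inside `w`; so
`z ∈ Rad w` bounds the length of such factors. Conversely, given a finite set `Y` of factors
containing `z`, each of length at most `M`, every subfactor of length `2M + |z|` of a concatenation
of elements of `Y` contains a whole block, hence `z`; so such concatenations are short.
-/

namespace List

variable {α : Type*}

theorem exists_mem_prefix_of_prefix_flatten {L : List (List α)} {v : List α} {M : ℕ}
    (hL : ∀ y ∈ L, y.length ≤ M) (hv : v <+: L.flatten) (hM : M < v.length) :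
    ∃ y ∈ L, y <+: v := by
  match L, hv with
  | [], hv =>
    rw [flatten_nil, prefix_nil] at hv
    simp [hv] at hM
  | y :: L', hv =>
    refine ⟨y, mem_cons_self, prefix_of_prefix_length_le (prefix_append y _) hv ?_⟩
    have := hL y mem_cons_self
    omega

theorem exists_mem_infix_of_infix_flatten {L : List (List α)} {u : List α} {M : ℕ}
    (hL : ∀ y ∈ L, y.length ≤ M) (hu : u <:+: L.flatten) (hM : 2 * M < u.length) :
    ∃ y ∈ L, y <:+: u := by
  induction L with
  | nil =>
    rw [flatten_nil, infix_nil] at hu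
    simp [hu] at hM
  | cons y L' ih =>
    have hL' : ∀ y ∈ L', y.length ≤ M := fun y' hy' => hL y' (mem_cons_of_mem y hy')
    obtain ⟨s, t, hst⟩ := hu
    rw [flatten_cons, append_assoc] at hst
    rcases append_eq_append_iff.mp hst with ⟨a, hy, hut⟩ | ⟨c, -, hflat⟩
    · -- `u` starts inside the block `y`, at offset `|s|`; `a` is the rest of `y`
      have ha : a.length ≤ M := by
        have := hL y mem_cons_self
        rw [hy, length_append] at this
        omega
      rcases append_eq_append_iff.mp hut with ⟨b, rfl, -⟩ | ⟨c, rfl, hflat⟩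
      · rw [length_append] at ha
        omega
      · obtain ⟨y', hy', hpre⟩ :=
          exists_mem_prefix_of_prefix_flatten hL' ⟨t, hflat.symm⟩ (by simp at hM; omega)
        exact ⟨y', mem_cons_of_mem y hy', hpre.isInfix.trans (suffix_append a c).isInfix⟩
    · obtain ⟨y', hy', hinf⟩ := ih hL' ⟨c, t, by rw [hflat, append_assoc]⟩
      exact ⟨y', mem_cons_of_mem y hy', hinf⟩

end List

section Factors

variable {A : Type*} (w : ℕ → A)

theorem length_factorAt (i n : ℕ) : (factorAt w i n).length = n := by
  simp [factorAt]

theorem factorAt_mem_Fac (i n : ℕ) : factorAt w i n ∈ Fac w :=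
  ⟨i, by rw [length_factorAt]⟩

theorem factorAt_add (i a b : ℕ) :
    factorAt w i (a + b) = factorAt w i a ++ factorAt w (i + a) b := by
  simp only [factorAt, List.range_add, List.map_append, List.map_map]
  congr 1
  exact List.map_congr_left fun k _ => by simp [Nat.add_assoc]

theorem factorAt_infix_factorAt {i a b c : ℕ} (h : a + b ≤ c) :
    factorAt w (i + a) b <:+: factorAt w i c := by
  obtain ⟨d, rfl⟩ := Nat.exists_eq_add_of_le h
  rw [factorAt_add, factorAt_add]
  exact List.infix_append _ _ _

theorem flatten_factorAt_blocks (i n m : ℕ) :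
    ((List.range m).map fun j => factorAt w (i + j * n) n).flatten = factorAt w i (m * n) := by
  induction m with
  | zero => simp [factorAt]
  | succ m ih =>
    rw [List.range_succ, List.map_append, List.flatten_append, ih, Nat.succ_mul, factorAt_add]
    simp

end Factors

section Radical

variable {A : Type*} {w : ℕ → A} {z : List A}

theorem exists_infix_not_infix_of_mem_Rad [Finite A] (hz : z ∈ Rad w) (n : ℕ) :
    ∃ N : ℕ, ∀ y ∈ Fac w, N ≤ y.length → ∃ u, u <:+: y ∧ u.length = n ∧ ¬ z <:+: u := by
  have hY : {u | u ∈ Fac w ∧ z <:+: u ∧ u.length = n}.Finite :=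
    (List.finite_length_eq A n).subset fun u hu => hu.2.2
  obtain ⟨N, hN⟩ := hz.2 hY.toFinset fun y hy => by
    rw [Set.Finite.mem_toFinset] at hy
    exact ⟨hy.1, hy.2.1⟩
  refine ⟨N * n, fun y ⟨i, hi⟩ hlen => ?_⟩
  by_contra! hcon
  let blocks := (List.range N).map fun j => factorAt w (i + j * n) n
  refine hN blocks (by simp [blocks]) ?_ ?_
  · simp only [blocks, List.mem_map, List.mem_range]
    rintro _ ⟨j, hj, rfl⟩
    have hinf : factorAt w (i + j * n) n <:+: y := by
      rw [hi]
      exact factorAt_infix_factorAt w (by nlinarith)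
    rw [Set.Finite.mem_toFinset]
    exact ⟨factorAt_mem_Fac w _ n, hcon _ hinf (length_factorAt w _ n), length_factorAt w _ n⟩
  · rw [flatten_factorAt_blocks]
    exact factorAt_mem_Fac w i (N * n)

theorem mem_Rad_of_forall_exists_infix_not_infix (hz : z ∈ Fac w)
    (h : ∀ n ≥ z.length, ∃ N : ℕ, ∀ y ∈ Fac w, N ≤ y.length →
      ∃ u, u <:+: y ∧ u.length = n ∧ ¬ z <:+: u) :
    z ∈ Rad w := by
  have hz_pos : 0 < z.length := by
    obtain ⟨N, hN⟩ := h z.length le_rfl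
    obtain ⟨u, -, -, hu⟩ := hN _ (factorAt_mem_Fac w 0 N) (length_factorAt w 0 N).ge
    exact List.length_pos_of_ne_nil fun hz_nil => hu (hz_nil ▸ List.nil_infix)
  refine ⟨hz, fun Y hY => ?_⟩
  set M := Y.sup List.length
  obtain ⟨N, hN⟩ := h (2 * M + z.length) (Nat.le_add_left _ _)
  refine ⟨N, fun L hlen hLY hflat => ?_⟩
  have hlong : N ≤ L.flatten.length := by
    rw [← hlen, List.length_flatten]
    simpa using List.length_le_sum_of_one_le (L.map List.length) (by
      simp only [List.mem_map]
      rintro _ ⟨y, hy, rfl⟩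
      exact hz_pos.trans_le (hY y (hLY y hy)).2.length_le)
  obtain ⟨u, hu, hulen, hzu⟩ := hN _ hflat hlong
  obtain ⟨y, hy, hyu⟩ := List.exists_mem_infix_of_infix_flatten
    (fun y hy => Finset.le_sup (f := List.length) (hLY y hy)) hu
    (by omega)
  exact hzu ((hY y (hLY y hy)).2.trans hyu)

end Radical

theorem mem_radical_iff {A : Type*} [Finite A] (w : ℕ → A) (z : List A)
    (hz : z ∈ Fac w) :
    z ∈ Rad w ↔ ∀ n ≥ z.length, ∃ N : ℕ, ∀ y ∈ Fac w, N ≤ y.length →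
      ∃ u, u <:+: y ∧ u.length = n ∧ ¬ z <:+: u :=
  ⟨fun hR n _ => exists_infix_not_infix_of_mem_Rad hR n,
    mem_Rad_of_forall_exists_infix_not_infix hz⟩
end

section
/- Let w be a right-infinite word over a finite alphabet. The collection of sets C(S) = { Fac(v) : v recurrent, Fac(v) ⊆ S }, as S ranges over factor-closed subsets of Fac(w), is closed under arbitrary intersections and finite unions, and contains both ∅ and the whole recurrent spectrum; hence it forms the closed sets of a topology on Rec(w). -/
lemma factorAt_length {A : Type*} (w : ℕ → A) (i n : ℕ) : (factorAt w i n).length = n := by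
  simp [factorAt]

lemma factorAt_getElem {A : Type*} (w : ℕ → A) (i n k : ℕ) (h : k < n) :
    (factorAt w i n)[k]'(by simpa [factorAt] using h) = w (i + k) := by
  simp [factorAt]

lemma fac_of_infix {A : Type*} {u y : List A} {w : ℕ → A} (h : u <:+: y) (hy : y ∈ Fac w) :
    u ∈ Fac w := by
  obtain ⟨s, t, rfl⟩ := h
  obtain ⟨i, hi⟩ := hy
  refine ⟨i + s.length, ?_⟩
  apply List.ext_getElem
  · simp [factorAt]
  · intro k h1 h2
    rw [factorAt_getElem w _ _ k (by simpa [factorAt_length] using h2)]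
    have hk : s.length + k < (s ++ u ++ t).length := by simp; omega
    have key := List.getElem_of_eq hi hk
    rw [factorAt_getElem w i _ (s.length + k) hk] at key
    have h3 : (s ++ u ++ t)[s.length + k]'hk = u[k]'h1 := by
      rw [List.getElem_append_left (by simp; omega : s.length + k < (s ++ u).length)]
      rw [List.getElem_append_right (by omega)]
      congr 1
      omega
    rw [h3] at key
    rw [key]
    congr 1
    omega

lemma factorClosed_fac {A : Type*} (w : ℕ → A) : FactorClosed (Fac w) :=
  fun _ hy _ hu => fac_of_infix hu hy

lemma nil_mem_fac {A : Type*} (w : ℕ → A) : ([] : List A) ∈ Fac w :=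
  ⟨0, by simp [factorAt]⟩

lemma factorAt_take {A : Type*} (w : ℕ → A) (i n k : ℕ) :
    (factorAt w i n).take k = factorAt w i (min k n) := by
  simp [factorAt, List.take_range, ← List.map_take]

lemma factorAt_drop {A : Type*} (w : ℕ → A) (i n k : ℕ) :
    (factorAt w i n).drop k = factorAt w (i + k) (n - k) := by
  apply List.ext_getElem
  · simp [factorAt_length]
  · intro m h1 h2
    rw [List.getElem_drop]
    rw [factorAt_getElem w i n (k + m) (by have := h1; simp [factorAt_length] at this; omega)]
    rw [factorAt_getElem w (i + k) (n - k) m (by simpa [factorAt_length] using h2)]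
    congr 1
    omega

/-- Any two factors of a recurrent word are factors of a common factor. -/
lemma common_factor {A : Type*} {v : ℕ → A} (hv : Recurrent v) {u₁ u₂ : List A}
    (h1 : u₁ ∈ Fac v) (h2 : u₂ ∈ Fac v) :
    ∃ y ∈ Fac v, u₁ <:+: y ∧ u₂ <:+: y := by
  obtain ⟨i, hi⟩ := h1
  obtain ⟨j, hj, hju⟩ := hv u₂ h2 (i + u₁.length)
  set n := j - i + u₂.length with hn
  refine ⟨factorAt v i n, ⟨i, by rw [factorAt_length]⟩, ?_, ?_⟩
  · have : u₁ = (factorAt v i n).take u₁.length := by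
      rw [factorAt_take]
      rw [min_eq_left (by omega)]
      exact hi
    rw [this]
    exact (List.take_prefix _ _).isInfix
  · have : u₂ = (factorAt v i n).drop (j - i) := by
      rw [factorAt_drop]
      have e1 : i + (j - i) = j := by omega
      have e2 : n - (j - i) = u₂.length := by omega
      rw [e1, e2]
      exact hju
    rw [this]
    exact (List.drop_suffix _ _).isInfix

/-- Key lemma: a recurrent word's factor set inside a union of two factor-closed
sets lies in one of them. -/
lemma rec_union {A : Type*} {v : ℕ → A} (hv : Recurrent v) {S₁ S₂ : Set (List A)}
    (h1 : FactorClosed S₁) (h2 : FactorClosed S₂) (hsub : Fac v ⊆ S₁ ∪ S₂) :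
    Fac v ⊆ S₁ ∨ Fac v ⊆ S₂ := by
  by_contra h
  push_neg at h
  obtain ⟨hA, hB⟩ := h
  obtain ⟨u₂, hu₂, hu₂'⟩ := Set.not_subset.mp hA
  obtain ⟨u₁, hu₁, hu₁'⟩ := Set.not_subset.mp hB
  obtain ⟨y, hy, hi1, hi2⟩ := common_factor hv hu₁ hu₂
  rcases hsub hy with hyS | hyS
  · exact hu₂' (h1 y hyS u₂ hi2)
  · exact hu₁' (h2 y hyS u₁ hi1)

theorem recSpec_closed_sets_topology {A : Type*} [Finite A] (w : ℕ → A) :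
    (∅ ∈ {T : Set (Set (List A)) | ∃ S, S ⊆ Fac w ∧ FactorClosed S ∧
        T = {F ∈ RecSpec w | F ⊆ S}}) ∧
    (RecSpec w ∈ {T : Set (Set (List A)) | ∃ S, S ⊆ Fac w ∧ FactorClosed S ∧
        T = {F ∈ RecSpec w | F ⊆ S}}) ∧
    (∀ 𝒜 : Set (Set (Set (List A))),
      𝒜 ⊆ {T | ∃ S, S ⊆ Fac w ∧ FactorClosed S ∧ T = {F ∈ RecSpec w | F ⊆ S}} →
      𝒜.Nonempty →
      ⋂₀ 𝒜 ∈ {T : Set (Set (List A)) | ∃ S, S ⊆ Fac w ∧ FactorClosed S ∧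
        T = {F ∈ RecSpec w | F ⊆ S}}) ∧
    (∀ T₁ ∈ {T : Set (Set (List A)) | ∃ S, S ⊆ Fac w ∧ FactorClosed S ∧
        T = {F ∈ RecSpec w | F ⊆ S}},
     ∀ T₂ ∈ {T : Set (Set (List A)) | ∃ S, S ⊆ Fac w ∧ FactorClosed S ∧
        T = {F ∈ RecSpec w | F ⊆ S}},
      T₁ ∪ T₂ ∈ {T : Set (Set (List A)) | ∃ S, S ⊆ Fac w ∧ FactorClosed S ∧
        T = {F ∈ RecSpec w | F ⊆ S}}) := by
  refine ⟨?_, ?_, ?_, ?_⟩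
  · -- ∅ is closed, with S = ∅
    refine ⟨∅, by simp, fun y hy u _ => hy.elim, ?_⟩
    ext F
    simp only [Set.mem_setOf_eq, Set.mem_empty_iff_false, false_iff]
    rintro ⟨⟨v, _, rfl, _⟩, hF⟩
    exact (hF (nil_mem_fac v)).elim
  · -- everything is closed, with S = Fac w
    refine ⟨Fac w, subset_rfl, factorClosed_fac w, ?_⟩
    ext F
    simp only [Set.mem_setOf_eq]
    constructor
    · rintro hF
      obtain ⟨v, _, rfl, hsub⟩ := hF
      exact ⟨⟨v, ‹_›, rfl, hsub⟩, hsub⟩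
    · exact fun h => h.1
  · -- arbitrary intersections
    rintro 𝒜 h𝒜 ⟨T₀, hT₀⟩
    refine ⟨{u | u ∈ Fac w ∧ ∀ T ∈ 𝒜, ∀ S', S' ⊆ Fac w → FactorClosed S' →
      T = {F ∈ RecSpec w | F ⊆ S'} → u ∈ S'}, fun u hu => hu.1, ?_, ?_⟩
    · rintro y ⟨hy1, hy2⟩ u hu
      refine ⟨factorClosed_fac w y hy1 u hu, fun T hT S' hS1 hS2 hS3 => ?_⟩
      exact hS2 y (hy2 T hT S' hS1 hS2 hS3) u hu
    · ext F
      simp only [Set.mem_sInter, Set.mem_setOf_eq]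
      constructor
      · intro hF
        obtain ⟨S₀, hS₀1, hS₀2, hS₀3⟩ := h𝒜 hT₀
        have hF₀ := hF T₀ hT₀
        rw [hS₀3] at hF₀
        refine ⟨hF₀.1, fun u hu => ⟨hS₀1 (hF₀.2 hu), ?_⟩⟩
        intro T hT S' hS1 hS2 hS3
        have := hF T hT
        rw [hS3] at this
        exact this.2 hu
      · rintro ⟨hF1, hF2⟩ T hT
        obtain ⟨S', hS1, hS2, hS3⟩ := h𝒜 hT
        rw [hS3]
        exact ⟨hF1, fun u hu => (hF2 hu).2 T hT S' hS1 hS2 hS3⟩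
  · -- finite unions
    rintro T₁ ⟨S₁, hS₁1, hS₁2, rfl⟩ T₂ ⟨S₂, hS₂1, hS₂2, rfl⟩
    refine ⟨S₁ ∪ S₂, Set.union_subset hS₁1 hS₂1, ?_, ?_⟩
    · rintro y (hy | hy) u hu
      · exact Or.inl (hS₁2 y hy u hu)
      · exact Or.inr (hS₂2 y hy u hu)
    · ext F
      simp only [Set.mem_union, Set.mem_setOf_eq]
      constructor
      · rintro (⟨h1, h2⟩ | ⟨h1, h2⟩)
        · exact ⟨h1, h2.trans Set.subset_union_left⟩
        · exact ⟨h1, h2.trans Set.subset_union_right⟩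
      · rintro ⟨hF, hsub⟩
        obtain ⟨v, hv, rfl, _⟩ := hF
        rcases rec_union hv hS₁2 hS₂2 hsub with h | h
        · exact Or.inl ⟨⟨v, hv, rfl, ‹_›⟩, h⟩
        · exact Or.inr ⟨⟨v, hv, rfl, ‹_›⟩, h⟩
end
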